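/- Suppose |D| < 1 and |A - D| < 2. Then for every β in the open interval (max{-P_0(1), P_0(-1)}, -D^2 + AD - B + 1), where P_0(λ) = λ^3 + Aλ^2 + Bλ + D, the polynomial P_β(λ) = λ^3 + Aλ^2 + (B+β)λ + D is stable (all complex roots have modulus < 1), and for every β outside the closure of this interval P_β has a complex root of modulus ≥ 1. -/

import Mathlib

/-!
Write `P(z) = z³ + Az² + bz + D` with `b = B + β` and factor it through a real root `r` as
`(z - r)(z² + pz + q)`, where `p = A + r` and `q = b + rA + r²`. The boundary expressions of the
interval factor accordingly: `P(1) = (1 - r)(1 + p + q)`, `P(-1) = -(1 + r)(1 - p + q)`, and the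
Jury expression `1 - b + AD - D² = (1 - q)(1 + r(A - D) + r²)`, whose second factor is positive
as `|A - D| < 2`. Inside the interval this forces `|r| < 1` together with the Jury conditions
`q < 1`, `1 ± p + q > 0` for the quadratic factor, so every root lies in the open unit disc.
Outside its closure, either `P(1) ≤ 0` or `P(-1) ≥ 0`, and the intermediate value theorem gives a
real root of modulus at least `1`; or `q > 1`, and one of the two roots of the quadratic factor,
whose product is `q`, has modulus greater than `1`.
-/

open Filter Polynomial Set

theorem tendsto_cubic_atTop (A b D : ℝ) :
    Tendsto (fun x : ℝ => x ^ 3 + A * x ^ 2 + b * x + D) atTop atTop := by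
  have hdeg : (X ^ 3 + C A * X ^ 2 + C b * X + C D : ℝ[X]).degree = 3 := by compute_degree!
  have hmonic : (X ^ 3 + C A * X ^ 2 + C b * X + C D : ℝ[X]).Monic := by monicity!
  convert tendsto_atTop_of_leadingCoeff_nonneg _ (by rw [hdeg]; norm_num)
    (by rw [hmonic.leadingCoeff]; norm_num) using 2
  simp

theorem tendsto_cubic_atBot (A b D : ℝ) :
    Tendsto (fun x : ℝ => x ^ 3 + A * x ^ 2 + b * x + D) atBot atBot := by
  convert tendsto_neg_atTop_atBot.comp
    ((tendsto_cubic_atTop (-A) b (-D)).comp tendsto_neg_atBot_atTop) using 1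
  ext x
  simp only [Function.comp_apply]
  ring

theorem exists_cubic_eq_zero (A b D : ℝ) : ∃ r : ℝ, r ^ 3 + A * r ^ 2 + b * r + D = 0 :=
  (by fun_prop : Continuous fun x : ℝ => x ^ 3 + A * x ^ 2 + b * x + D).surjective
    (tendsto_cubic_atTop A b D) (tendsto_cubic_atBot A b D) 0

section RealCubic

variable {A b D : ℝ}

theorem exists_cubic_eq_zero_ge_of_nonpos {a : ℝ} (ha : a ^ 3 + A * a ^ 2 + b * a + D ≤ 0) :
    ∃ r, a ≤ r ∧ r ^ 3 + A * r ^ 2 + b * r + D = 0 :=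
  intermediate_value_Ici (by fun_prop) (tendsto_cubic_atTop A b D) ha

theorem exists_cubic_eq_zero_le_of_nonneg {a : ℝ} (ha : 0 ≤ a ^ 3 + A * a ^ 2 + b * a + D) :
    ∃ r, r ≤ a ∧ r ^ 3 + A * r ^ 2 + b * r + D = 0 :=
  intermediate_value_Iic (by fun_prop) (tendsto_cubic_atBot A b D) ha

end RealCubic

theorem cubic_eq_mul_quadratic {R : Type*} [CommRing R] {A b D r : R}
    (hr : r ^ 3 + A * r ^ 2 + b * r + D = 0) (z : R) :
    z ^ 3 + A * z ^ 2 + b * z + D = (z - r) * (z ^ 2 + (A + r) * z + (b + r * A + r ^ 2)) := by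
  linear_combination hr

theorem abs_lt_one_of_quadratic_eq_zero {p q x : ℝ} (hq : q < 1) (h1 : 0 < 1 + p + q)
    (h2 : 0 < 1 - p + q) (hx : x ^ 2 + p * x + q = 0) : |x| < 1 := by
  have e1 : 1 + p + q = (1 - x) * (1 + p + x) := by linear_combination hx
  have e2 : 1 - p + q = (1 + x) * (1 - p - x) := by linear_combination hx
  have e3 : q = x * -(p + x) := by linear_combination hx
  rw [abs_lt]
  constructor
  · by_contra! hx1
    have : 1 - p - x < 0 := by nlinarith
    nlinarith
  · by_contra! hx1
    have : 1 + p + x < 0 := by nlinarith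
    nlinarith

theorem norm_lt_one_of_quadratic_eq_zero {p q : ℝ} (hq : q < 1) (h1 : 0 < 1 + p + q)
    (h2 : 0 < 1 - p + q) {z : ℂ} (hz : z ^ 2 + p * z + q = 0) : ‖z‖ < 1 := by
  have hre : z.re ^ 2 - z.im ^ 2 + p * z.re + q = 0 := by
    simpa [pow_two] using congrArg Complex.re hz
  have him : z.im * (2 * z.re + p) = 0 := by
    linear_combination (by simpa [pow_two] using congrArg Complex.im hz : _ = _)
  rcases mul_eq_zero.mp him with hy | hp
  · rw [← Complex.re_add_im z, hy, Complex.ofReal_zero, zero_mul, add_zero, Complex.norm_real,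
      Real.norm_eq_abs]
    exact abs_lt_one_of_quadratic_eq_zero hq h1 h2 (by rw [hy] at hre; linear_combination hre)
  · rw [← sq_lt_one_iff₀ (norm_nonneg z), Complex.sq_norm, Complex.normSq_apply]
    nlinarith

theorem exists_quadratic_eq_zero_one_lt_norm (p : ℂ) {q : ℂ} (hq : 1 < ‖q‖) :
    ∃ z : ℂ, z ^ 2 + p * z + q = 0 ∧ 1 < ‖z‖ := by
  obtain ⟨z, hz⟩ := exists_quadratic_eq_zero (a := 1) (b := p) (c := q) one_ne_zero
    (IsAlgClosed.exists_eq_mul_self _)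
  have hprod : ‖z‖ * ‖-p - z‖ = ‖q‖ := by
    rw [← norm_mul]
    congr 1
    linear_combination -hz
  by_cases hz1 : 1 < ‖z‖
  · exact ⟨z, by linear_combination hz, hz1⟩
  · refine ⟨-p - z, by linear_combination hz, ?_⟩
    nlinarith [norm_nonneg z, norm_nonneg (-p - z)]

theorem one_add_mul_add_sq_pos {c : ℝ} (hc : |c| < 2) (r : ℝ) : 0 < 1 + r * c + r ^ 2 := by
  obtain ⟨hc1, hc2⟩ := abs_lt.mp hc
  nlinarith [sq_nonneg (2 * r + c)]

section CubicRoot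

variable {A b D r : ℝ}

theorem cubic_one_eq_mul (hr : r ^ 3 + A * r ^ 2 + b * r + D = 0) :
    1 + A + b + D = (1 - r) * (1 + (A + r) + (b + r * A + r ^ 2)) := by
  linear_combination hr

theorem cubic_neg_one_eq_mul (hr : r ^ 3 + A * r ^ 2 + b * r + D = 0) :
    -1 + A - b + D = -(1 + r) * (1 - (A + r) + (b + r * A + r ^ 2)) := by
  linear_combination hr

theorem jury_eq_mul (hr : r ^ 3 + A * r ^ 2 + b * r + D = 0) :
    1 - b + A * D - D ^ 2 = (1 - (b + r * A + r ^ 2)) * (1 + r * (A - D) + r ^ 2) := by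
  linear_combination (A + r - D) * hr

theorem abs_lt_one_of_cubic_eq_zero (hD : |D| < 1) (hAD : |A - D| < 2)
    (h1 : 0 < 1 + A + b + D) (h2 : -1 + A - b + D < 0)
    (hr : r ^ 3 + A * r ^ 2 + b * r + D = 0) : |r| < 1 := by
  obtain ⟨hD1, hD2⟩ := abs_lt.mp hD
  have hF := one_add_mul_add_sq_pos hAD r
  have e1 := cubic_one_eq_mul hr
  have e2 := cubic_neg_one_eq_mul hr
  rw [abs_lt]
  constructor
  · by_contra! hr1
    have hQ : 1 - (A + r) + (b + r * A + r ^ 2) < 0 := by nlinarith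
    have hF_eq : 1 + r * (A - D) + r ^ 2 =
        -r * (1 - (A + r) + (b + r * A + r ^ 2)) + (1 + r) * (1 - D) := by
      linear_combination hr
    nlinarith [mul_nonpos_of_nonpos_of_nonneg (by linarith : 1 + r ≤ 0)
      (by linarith : 0 ≤ 1 - D)]
  · by_contra! hr1
    have hQ : 1 + (A + r) + (b + r * A + r ^ 2) < 0 := by nlinarith
    have hF_eq : 1 + r * (A - D) + r ^ 2 =
        r * (1 + (A + r) + (b + r * A + r ^ 2)) - (r - 1) * (1 + D) := by
      linear_combination -hr
    nlinarith [mul_nonneg (by linarith : 0 ≤ r - 1) (by linarith : 0 ≤ 1 + D)]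

end CubicRoot

section ComplexRoots

variable {A b D : ℝ}

theorem norm_lt_one_of_cubic_eq_zero (hD : |D| < 1) (hAD : |A - D| < 2)
    (h1 : 0 < 1 + A + b + D) (h2 : -1 + A - b + D < 0) (h3 : 0 < 1 - b + A * D - D ^ 2)
    {z : ℂ} (hz : z ^ 3 + A * z ^ 2 + b * z + D = 0) : ‖z‖ < 1 := by
  obtain ⟨r, hr⟩ := exists_cubic_eq_zero A b D
  have hr1 := abs_lt_one_of_cubic_eq_zero hD hAD h1 h2 hr
  obtain ⟨hr1l, hr1r⟩ := abs_lt.mp hr1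
  rw [cubic_eq_mul_quadratic (r := (r : ℂ)) (by exact_mod_cast hr)] at hz
  rcases mul_eq_zero.mp hz with hz | hz
  · rwa [sub_eq_zero.mp hz, Complex.norm_real]
  · refine norm_lt_one_of_quadratic_eq_zero (p := A + r) (q := b + r * A + r ^ 2)
      (by nlinarith [jury_eq_mul hr, one_add_mul_add_sq_pos hAD r])
      (by nlinarith [cubic_one_eq_mul hr]) (by nlinarith [cubic_neg_one_eq_mul hr]) ?_
    push_cast
    exact hz

theorem exists_one_lt_norm_of_jury_neg (hAD : |A - D| < 2) (h : 1 - b + A * D - D ^ 2 < 0) :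
    ∃ z : ℂ, z ^ 3 + A * z ^ 2 + b * z + D = 0 ∧ 1 < ‖z‖ := by
  obtain ⟨r, hr⟩ := exists_cubic_eq_zero A b D
  have hq : 1 < b + r * A + r ^ 2 := by
    nlinarith [jury_eq_mul hr, one_add_mul_add_sq_pos hAD r]
  obtain ⟨z, hz, hz1⟩ := exists_quadratic_eq_zero_one_lt_norm ((A + r : ℝ) : ℂ)
    (q := ((b + r * A + r ^ 2 : ℝ) : ℂ))
    (by rwa [Complex.norm_real, Real.norm_eq_abs, abs_of_pos (by linarith)])
  refine ⟨z, ?_, hz1⟩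
  push_cast at hz
  rw [cubic_eq_mul_quadratic (r := (r : ℂ)) (by exact_mod_cast hr), hz, mul_zero]

theorem exists_one_le_norm_of_cubic_eq_zero (hAD : |A - D| < 2)
    (h : 1 + A + b + D ≤ 0 ∨ 0 ≤ -1 + A - b + D ∨ 1 - b + A * D - D ^ 2 < 0) :
    ∃ z : ℂ, z ^ 3 + A * z ^ 2 + b * z + D = 0 ∧ 1 ≤ ‖z‖ := by
  rcases h with h | h | h
  · obtain ⟨r, hr1, hr⟩ := exists_cubic_eq_zero_ge_of_nonpos (A := A) (b := b) (D := D)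
      (a := 1) (by linarith)
    refine ⟨r, by exact_mod_cast hr, ?_⟩
    rw [Complex.norm_real, Real.norm_eq_abs]
    exact hr1.trans (le_abs_self r)
  · obtain ⟨r, hr1, hr⟩ := exists_cubic_eq_zero_le_of_nonneg (A := A) (b := b) (D := D)
      (a := -1) (by linarith)
    refine ⟨r, by exact_mod_cast hr, ?_⟩
    rw [Complex.norm_real, Real.norm_eq_abs]
    exact le_abs.mpr (Or.inr (by linarith))
  · obtain ⟨z, hz, hz1⟩ := exists_one_lt_norm_of_jury_neg hAD h
    exact ⟨z, hz, hz1.le⟩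

end ComplexRoots

/-- Under `|D| < 1` and `|A - D| < 2`, the set of parameters `β` for which
`P_β(λ) = λ³ + Aλ² + (B+β)λ + D` is stable is exactly the open interval
`(max{-P₀(1), P₀(-1)}, -D² + AD - B + 1)`: inside the interval all complex roots have
modulus `< 1`, and outside its closure some complex root has modulus `≥ 1`. -/
theorem stable_interval (A B D : ℝ) (hD : |D| < 1) (hAD : |A - D| < 2) :
    (∀ β ∈ Set.Ioo (max (-(1 + A + B + D)) (-1 + A - B + D)) (-D ^ 2 + A * D - B + 1),
      ∀ z : ℂ, z ^ 3 + (A : ℂ) * z ^ 2 + ((B : ℂ) + (β : ℂ)) * z + (D : ℂ) = 0 →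
        ‖z‖ < 1) ∧
    (∀ β : ℝ,
      β ∉ closure (Set.Ioo (max (-(1 + A + B + D)) (-1 + A - B + D))
        (-D ^ 2 + A * D - B + 1)) →
      ∃ z : ℂ, z ^ 3 + (A : ℂ) * z ^ 2 + ((B : ℂ) + (β : ℂ)) * z + (D : ℂ) = 0 ∧
        1 ≤ ‖z‖) := by
  obtain ⟨hD1, hD2⟩ := abs_lt.mp hD
  obtain ⟨hAD1, hAD2⟩ := abs_lt.mp hAD
  have hLU : max (-(1 + A + B + D)) (-1 + A - B + D) < -D ^ 2 + A * D - B + 1 :=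
    max_lt (by nlinarith [mul_pos (by linarith : 0 < 1 + D) (by linarith : 0 < 2 + A - D)])
      (by nlinarith [mul_pos (by linarith : 0 < 1 - D) (by linarith : 0 < 2 - A + D)])
  refine ⟨fun β ⟨hβL, hβU⟩ z hz => ?_, fun β hβ => ?_⟩
  · rw [max_lt_iff] at hβL
    exact norm_lt_one_of_cubic_eq_zero (b := B + β) hD hAD (by linarith) (by linarith)
      (by linarith) (by push_cast; exact hz)
  · rw [closure_Ioo hLU.ne, mem_Icc, max_le_iff] at hβ
    obtain ⟨z, hz, hz1⟩ := exists_one_le_norm_of_cubic_eq_zero (b := B + β) hAD (by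
      contrapose! hβ
      exact ⟨⟨by linarith, by linarith⟩, by linarith⟩)
    exact ⟨z, by push_cast at hz; exact hz, hz1⟩
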